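/- arXiv:2008.00779 — 2 statements merged into one kernel-verified Lean document; each statement's English description precedes it below -/
import Mathlib

section
/- In every path decomposition of B(T_h), there exist a bag B of size at least t(h+1) and t vertex-disjoint paths in B(T_h), each with one endpoint in the root clique and the other endpoint in B. -/
open SimpleGraph

/-- A tree decomposition of a graph `G`. -/
structure TreeDecomp {V : Type} (G : SimpleGraph V) where
  ι : Type
  tree : SimpleGraph ι
  isTree : tree.IsTree
  bag : ι → Finset V
  covers : ∀ v : V, ∃ x, v ∈ bag x
  coversEdge : ∀ ⦃u v : V⦄, G.Adj u v → ∃ x, u ∈ bag x ∧ v ∈ bag x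
  bagConn : ∀ v : V, (tree.induce {x | v ∈ bag x}).Connected

/-- `G` has a tree decomposition of width at most `k` (bags of size at most `k+1`). -/
def TwLE {V : Type} (G : SimpleGraph V) (k : ℕ) : Prop :=
  ∃ D : TreeDecomp G, ∀ x, (D.bag x).card ≤ k + 1

/-- A path decomposition of a graph `G`: a sequence of bags. -/
structure PathDecomp {V : Type} (G : SimpleGraph V) where
  n : ℕ
  bag : Fin n → Finset V
  covers : ∀ v : V, ∃ i, v ∈ bag i
  coversEdge : ∀ ⦃u v : V⦄, G.Adj u v → ∃ i, u ∈ bag i ∧ v ∈ bag i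
  consecutive : ∀ (v : V) (i j k : Fin n), i ≤ j → j ≤ k → v ∈ bag i → v ∈ bag k → v ∈ bag j

/-- `G` has a path decomposition of width at most `k` (bags of size at most `k+1`). -/
def PwLE {V : Type} (G : SimpleGraph V) (k : ℕ) : Prop :=
  ∃ P : PathDecomp G, ∀ i, (P.bag i).card ≤ k + 1

/-- A copy of a subdivision of the tree `T` inside the graph `G`:
branch vertices `φ x`, and for each edge of `T` a path of `G` between the
corresponding branch vertices, internally disjoint from all branch vertices
and from the paths of all other edges. -/
structure SubdivCopy {α V : Type} (T : SimpleGraph α) (G : SimpleGraph V) where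
  φ : α → V
  inj : Function.Injective φ
  path : ∀ ⦃x y : α⦄, T.Adj x y → G.Walk (φ x) (φ y)
  isPath : ∀ ⦃x y : α⦄ (h : T.Adj x y), (path h).IsPath
  branch : ∀ ⦃x y : α⦄ (h : T.Adj x y) (z : α), φ z ∈ (path h).support → z = x ∨ z = y
  disj : ∀ ⦃x y x' y' : α⦄ (h : T.Adj x y) (h' : T.Adj x' y'),
    ({x, y} : Set α) ≠ {x', y'} →
    ∀ v, v ∈ (path h).support → v ∈ (path h').support →
      v ∈ φ '' (({x, y} : Set α) ∩ {x', y'})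

/-- The set of vertices used by a subdivision copy. -/
def SubdivCopy.supp {α V : Type} {T : SimpleGraph α} {G : SimpleGraph V}
    (c : SubdivCopy T G) : Set V :=
  Set.range c.φ ∪ {v | ∃ x y, ∃ h : T.Adj x y, v ∈ (c.path h).support}

/-- `G` contains a subdivision of `T` as a subgraph. -/
def ContainsSubdiv {α V : Type} (T : SimpleGraph α) (G : SimpleGraph V) : Prop :=
  Nonempty (SubdivCopy T G)

/-- `S` is (isomorphic to) a subdivision of `T`: a subdivision copy of `T`
using all vertices and all edges of `S`. -/
def IsSubdivisionOf {α W : Type} (T : SimpleGraph α) (S : SimpleGraph W) : Prop :=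
  ∃ c : SubdivCopy T S, c.supp = Set.univ ∧
    ∀ ⦃u w : W⦄, S.Adj u w → ∃ x y, ∃ h : T.Adj x y, s(u, w) ∈ (c.path h).edges

/-- The complete binary tree of height `h`, as a simple graph: vertices are
binary strings of length at most `h`, with edges between a string and its
one-letter extensions. -/
def CBT (h : ℕ) : SimpleGraph {l : List Bool // l.length ≤ h} :=
  SimpleGraph.fromRel (fun x y => ∃ b, y.val = b :: x.val)

/-- The root of the complete binary tree. -/
def CBTroot (h : ℕ) : {l : List Bool // l.length ≤ h} := ⟨[], by simp⟩

/-- The complete ternary tree of height `h`, as a simple graph. -/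
def CTT (h : ℕ) : SimpleGraph {l : List (Fin 3) // l.length ≤ h} :=
  SimpleGraph.fromRel (fun x y => ∃ b, y.val = b :: x.val)

/-- The root of the complete ternary tree. -/
def CTTroot (h : ℕ) : {l : List (Fin 3) // l.length ≤ h} := ⟨[], by simp⟩

/-- There are `a ∈ A` and `b ∈ B` joined by a walk of `G` avoiding `C`. -/
def LinkedAvoiding {V : Type} (G : SimpleGraph V) (A B C : Set V) : Prop :=
  ∃ a ∈ A, ∃ b ∈ B, ∃ p : G.Walk a b, ∀ x ∈ p.support, x ∉ C

/-- The classes `𝒯_h`: `InT 0 G` iff `G` is connected (hence non-empty);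
`InT (h+1) G` iff `G` is connected and has three pairwise disjoint vertex sets
inducing graphs in `𝒯_h`, any two of which are linked by a path avoiding the third. -/
def InTAux : ℕ → (V : Type) → SimpleGraph V → Prop
  | 0, _, G => G.Connected
  | h + 1, V, G => G.Connected ∧ ∃ V₁ V₂ V₃ : Set V,
      Disjoint V₁ V₂ ∧ Disjoint V₁ V₃ ∧ Disjoint V₂ V₃ ∧
      InTAux h V₁ (G.induce V₁) ∧ InTAux h V₂ (G.induce V₂) ∧ InTAux h V₃ (G.induce V₃) ∧
      LinkedAvoiding G V₁ V₂ V₃ ∧ LinkedAvoiding G V₁ V₃ V₂ ∧ LinkedAvoiding G V₂ V₃ V₁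

def InT (h : ℕ) {V : Type} (G : SimpleGraph V) : Prop := InTAux h V G

/-!
Induction on `h`. In `B(T_{h+1})`, each of the three copies of `B(T_h)` below the root has a bag
`I b` holding `t (h + 1)` of its vertices and reached from its root clique by `t` disjoint paths
inside the copy, while the root clique itself lies in a single bag `i₀`. One of the three bags,
`I m`, lies between `i₀` and another one, `I s`. The `t` disjoint paths from the root clique
through the matching into copy `s` and on to `I s` must all cross `I m`, which thus contains `t`
further vertices outside copy `m`, each reached from the root clique.
-/
abbrev CTTVert (h : ℕ) := {l : List (Fin 3) // l.length ≤ h}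

namespace CTT

variable {h : ℕ}

/-- Vertices are stored leaf first, so appending `b` embeds `T_h` as the subtree of `T_{h+1}`
below the child `[b]` of the root. -/
def child (b : Fin 3) (x : CTTVert h) : CTTVert (h + 1) :=
  ⟨x.1 ++ [b], by simpa using x.2⟩

lemma child_injective (b : Fin 3) : Function.Injective (child (h := h) b) := fun x y hxy =>
  Subtype.ext (by simpa [child] using congrArg Subtype.val hxy)

lemma eq_of_child_eq {b b' : Fin 3} {x y : CTTVert h} (hxy : child b x = child b' y) :
    b = b' := by
  simpa using (List.append_inj' (congrArg Subtype.val hxy) rfl).2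

lemma child_ne_root (b : Fin 3) (x : CTTVert h) : child b x ≠ CTTroot (h + 1) := fun hx => by
  simpa [child, CTTroot] using congrArg Subtype.val hx

lemma adj_child {x y : CTTVert h} (hxy : (CTT h).Adj x y) (b : Fin 3) :
    (CTT (h + 1)).Adj (child b x) (child b y) := by
  simp only [CTT, fromRel_adj, ne_eq, child, Subtype.ext_iff] at hxy ⊢
  obtain ⟨hne, ⟨c, hc⟩ | ⟨c, hc⟩⟩ := hxy
  · exact ⟨by simpa using hne, Or.inl ⟨c, by simp [hc]⟩⟩
  · exact ⟨by simpa using hne, Or.inr ⟨c, by simp [hc]⟩⟩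

lemma adj_root_child (b : Fin 3) : (CTT (h + 1)).Adj (CTTroot (h + 1)) (child b (CTTroot h)) :=
  (fromRel_adj _ _ _).2 ⟨(child_ne_root b _).symm, Or.inl ⟨b, rfl⟩⟩

end CTT

lemma exists_ne_mem_uIcc {α : Type*} [LinearOrder α] (a : α) (f : Fin 3 → α) :
    ∃ m s, m ≠ s ∧ f m ∈ Set.uIcc a (f s) := by
  obtain ⟨x, y, hxy, hside⟩ :=
    Fintype.exists_ne_map_eq_of_card_lt (fun i => decide (a ≤ f i)) (by simp)
  simp only [decide_eq_decide] at hside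
  wlog hle : f x ≤ f y generalizing x y
  · exact this y x hxy.symm hside.symm (le_of_not_ge hle)
  by_cases hax : a ≤ f x
  · exact ⟨x, y, hxy, Set.mem_uIcc_of_le hax hle⟩
  · exact ⟨y, x, hxy.symm, Set.mem_uIcc_of_ge hle (le_of_not_ge (mt hside.2 hax))⟩

namespace PathDecomp

variable {V : Type} {G : SimpleGraph V} (P : PathDecomp G)

lemma exists_mem_support_mem_bag_of_le {x y : V} (q : G.Walk x y) {a m b : Fin P.n}
    (ham : a ≤ m) (hmb : m ≤ b) (hx : x ∈ P.bag a) (hy : y ∈ P.bag b) :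
    ∃ v ∈ q.support, v ∈ P.bag m := by
  induction q generalizing a with
  | nil => exact ⟨_, Walk.start_mem_support _, P.consecutive _ a m b ham hmb hx hy⟩
  | cons hadj q ih =>
    obtain ⟨c, hc₁, hc₂⟩ := P.coversEdge hadj
    rcases le_total c m with hcm | hmc
    · obtain ⟨v, hv, hvm⟩ := ih hcm hc₂ hy
      exact ⟨v, Walk.support_cons _ _ ▸ List.mem_cons_of_mem _ hv, hvm⟩
    · exact ⟨_, Walk.start_mem_support _, P.consecutive _ a m c ham hmc hx hc₁⟩

lemma exists_mem_support_mem_bag {x y : V} (q : G.Walk x y) {a m b : Fin P.n}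
    (hm : m ∈ Set.uIcc a b) (hx : x ∈ P.bag a) (hy : y ∈ P.bag b) :
    ∃ v ∈ q.support, v ∈ P.bag m := by
  rcases Set.mem_uIcc.1 hm with ⟨ham, hmb⟩ | ⟨hbm, hma⟩
  · exact P.exists_mem_support_mem_bag_of_le q ham hmb hx hy
  · simpa using P.exists_mem_support_mem_bag_of_le q.reverse hbm hma hy hx

lemma exists_first_bag (v : V) : ∃ i, v ∈ P.bag i ∧ ∀ j, v ∈ P.bag j → i ≤ j := by
  classical
  obtain ⟨i, hi⟩ := P.covers v
  obtain ⟨k, hk, hkmin⟩ :=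
    (Finset.univ.filter fun j => v ∈ P.bag j).exists_min_image id ⟨i, by simpa⟩
  exact ⟨k, by simpa using hk, fun j hj => hkmin j (by simpa)⟩

/-- The bag of the clique vertex whose first bag comes last contains the whole clique. -/
lemma exists_bag_superset_of_isClique {s : Finset V} (hs : s.Nonempty)
    (hc : G.IsClique (s : Set V)) : ∃ i, s ⊆ P.bag i := by
  choose f hf hfmin using P.exists_first_bag
  obtain ⟨v₀, hv₀, hv₀max⟩ := s.exists_max_image f hs
  refine ⟨f v₀, fun v hv => ?_⟩
  obtain rfl | hne := eq_or_ne v v₀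
  · exact hf v
  · obtain ⟨c, hvc, hv₀c⟩ := P.coversEdge (hc hv hv₀ hne)
    exact P.consecutive v (f v) (f v₀) c (hv₀max v hv) (hfmin v₀ c hv₀c) (hf v) hvc

end PathDecomp

variable {V : Type} {G : SimpleGraph V}

structure Linkage {ι : Type} (G : SimpleGraph V) (U : Set V) (a : ι → V) (B : Set V) where
  target : ι → V
  walk : ∀ i, G.Walk (a i) (target i)
  isPath : ∀ i, (walk i).IsPath
  target_mem : ∀ i, target i ∈ B
  support_subset : ∀ i, ∀ v ∈ (walk i).support, v ∈ U
  pairwise_disjoint : Pairwise fun i i' => ∀ v ∈ (walk i).support, v ∉ (walk i').support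

namespace Linkage

variable {ι : Type} {U U' B : Set V} {a : ι → V}

def nil (ha : Function.Injective a) (haU : ∀ i, a i ∈ U) (haB : ∀ i, a i ∈ B) :
    Linkage G U a B where
  target := a
  walk _ := Walk.nil
  isPath _ := Walk.IsPath.nil
  target_mem := haB
  support_subset i v hv := by
    rw [Walk.support_nil, List.mem_singleton] at hv
    exact hv ▸ haU i
  pairwise_disjoint i i' hii' v hv hv' := by
    rw [Walk.support_nil, List.mem_singleton] at hv hv'
    exact hii' (ha (hv.symm.trans hv'))

def mono (L : Linkage G U a B) (hU : U ⊆ U') : Linkage G U' a B :=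
  { L with support_subset := fun i v hv => hU (L.support_subset i v hv) }

lemma target_mem_set (L : Linkage G U a B) (i : ι) : L.target i ∈ U :=
  L.support_subset i _ (L.walk i).end_mem_support

lemma target_injective (L : Linkage G U a B) : Function.Injective L.target := fun i i' h =>
  by_contra fun hne =>
    L.pairwise_disjoint hne _ (L.walk i).end_mem_support
      (by rw [h]; exact (L.walk i').end_mem_support)

def cons (L : Linkage G U a B) (a' : ι → V) (σ : Equiv.Perm ι)
    (hadj : ∀ i, G.Adj (a' i) (a (σ i))) (ha' : Function.Injective a')
    (ha'U : ∀ i, a' i ∉ U) :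
    Linkage G (U ∪ Set.range a') a' B where
  target i := L.target (σ i)
  walk i := Walk.cons (hadj i) (L.walk (σ i))
  isPath i := (L.isPath _).cons fun h => ha'U i (L.support_subset _ _ h)
  target_mem i := L.target_mem _
  support_subset i v hv := by
    rcases List.mem_cons.1 (Walk.support_cons _ _ ▸ hv) with rfl | hv
    · exact Or.inr ⟨i, rfl⟩
    · exact Or.inl (L.support_subset _ v hv)
  pairwise_disjoint i i' hii' v hv hv' := by
    rw [Walk.support_cons, List.mem_cons] at hv hv'
    rcases hv with rfl | hv <;> rcases hv' with hv' | hv'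
    · exact hii' (ha' hv')
    · exact ha'U i (L.support_subset _ _ hv')
    · exact ha'U i' (hv' ▸ L.support_subset _ _ hv)
    · exact L.pairwise_disjoint (σ.injective.ne hii') v hv hv'

/-- Paths from the bag `i₀` to the bag `s` all cross the bag `m` between them, so they can be
cut short there. -/
lemma truncate (P : PathDecomp G) {i₀ m s : Fin P.n} (L : Linkage G U a (P.bag s))
    (ha : ∀ i, a i ∈ P.bag i₀) (hm : m ∈ Set.uIcc i₀ s) :
    Nonempty (Linkage G U a (P.bag m)) := by
  classical
  choose w hw hwm using fun i =>
    P.exists_mem_support_mem_bag (L.walk i) hm (ha i) (L.target_mem i)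
  have hsub i :
      ∀ v ∈ ((L.walk i).takeUntil (w i) (hw i)).support, v ∈ (L.walk i).support :=
    fun v hv => (L.walk i).support_takeUntil_subset_support (hw i) hv
  exact ⟨{
    target := w
    walk i := (L.walk i).takeUntil (w i) (hw i)
    isPath i := (L.isPath i).takeUntil _
    target_mem := hwm
    support_subset i v hv := L.support_subset i v (hsub i v hv)
    pairwise_disjoint i i' hii' v hv hv' :=
      L.pairwise_disjoint hii' v (hsub i v hv) (hsub i' v hv') }⟩

end Linkage

/-- `e` embeds `B(T_h)`, with cliques of size `t`, into `G` as a not necessarily induced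
subgraph. -/
structure IsBlowupEmbedding (h t : ℕ) (G : SimpleGraph V) (e : CTTVert h × Fin t → V) :
    Prop where
  injective : Function.Injective e
  adj_of_ne : ∀ x {j j' : Fin t}, j ≠ j' → G.Adj (e (x, j)) (e (x, j'))
  exists_matching : ∀ {x y}, (CTT h).Adj x y →
    ∃ σ : Equiv.Perm (Fin t), ∀ j, G.Adj (e (x, j)) (e (y, σ j))

def HasLinkedBag {h t : ℕ} (P : PathDecomp G) (e : CTTVert h × Fin t → V) (k : ℕ) : Prop :=
  ∃ i, ∃ S ⊆ P.bag i, (S : Set V) ⊆ Set.range e ∧ k ≤ S.card ∧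
    Nonempty (Linkage G (Set.range e) (fun j => e (CTTroot h, j)) (P.bag i))

namespace IsBlowupEmbedding

section

variable {h t : ℕ} {e : CTTVert h × Fin t → V}

lemma exists_bag_clique (he : IsBlowupEmbedding h t G e) (ht : 0 < t) (P : PathDecomp G)
    (x : CTTVert h) : ∃ i, ∀ j, e (x, j) ∈ P.bag i := by
  classical
  obtain ⟨i, hi⟩ := P.exists_bag_superset_of_isClique (s := Finset.univ.image fun j => e (x, j))
    (Finset.univ_nonempty_iff.2 ⟨⟨0, ht⟩⟩ |>.image _) (by
      simp only [Finset.coe_image, Finset.coe_univ, Set.image_univ]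
      rintro _ ⟨j, rfl⟩ _ ⟨j', rfl⟩ hne
      exact he.adj_of_ne x fun hjj => hne (hjj ▸ rfl))
  exact ⟨i, fun j => hi (Finset.mem_image_of_mem _ (Finset.mem_univ j))⟩

lemma hasLinkedBag_card (he : IsBlowupEmbedding h t G e) (ht : 0 < t) (P : PathDecomp G) :
    HasLinkedBag P e t := by
  classical
  obtain ⟨i, hi⟩ := he.exists_bag_clique ht P (CTTroot h)
  have hinj : Function.Injective fun j => e (CTTroot h, j) :=
    he.injective.comp (Prod.mk_right_injective _)
  refine ⟨i, Finset.univ.image fun j => e (CTTroot h, j), ?_, ?_, ?_,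
    ⟨Linkage.nil hinj (fun j => ⟨_, rfl⟩) hi⟩⟩
  · simpa [Finset.image_subset_iff] using hi
  · rw [Finset.coe_image, Finset.coe_univ, Set.image_univ]
    exact Set.range_comp_subset_range _ e
  · simp [Finset.card_image_of_injective _ hinj]

end

section

variable {h t : ℕ} {e : CTTVert (h + 1) × Fin t → V}

lemma comp_child (he : IsBlowupEmbedding (h + 1) t G e) (b : Fin 3) :
    IsBlowupEmbedding h t G (e ∘ Prod.map (CTT.child b) id) where
  injective := he.injective.comp ((CTT.child_injective b).prodMap fun _ _ => id)
  adj_of_ne _ _ _ hjj := he.adj_of_ne _ hjj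
  exists_matching hxy := he.exists_matching (CTT.adj_child hxy b)

lemma root_notMem_range_child (he : IsBlowupEmbedding (h + 1) t G e) (b : Fin 3) (j : Fin t) :
    e (CTTroot (h + 1), j) ∉ Set.range (e ∘ Prod.map (CTT.child b) id) := by
  rintro ⟨x, hx⟩
  exact CTT.child_ne_root b x.1 (congrArg Prod.fst (he.injective hx))

lemma disjoint_range_child (he : IsBlowupEmbedding (h + 1) t G e) {b b' : Fin 3}
    (hbb' : b ≠ b') :
    Disjoint (Set.range (e ∘ Prod.map (CTT.child b) id))
      (Set.range (e ∘ Prod.map (CTT.child b') id)) :=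
  Set.disjoint_range_iff.2 fun _ _ hxy =>
    hbb' (CTT.eq_of_child_eq (congrArg Prod.fst (he.injective hxy)))

lemma hasLinkedBag_succ (he : IsBlowupEmbedding (h + 1) t G e) (ht : 0 < t) (P : PathDecomp G)
    {k : ℕ}
    (ih : ∀ b, HasLinkedBag P (e ∘ Prod.map (CTT.child b) id) k) :
    HasLinkedBag P e (k + t) := by
  classical
  choose I S hSbag hSrange hScard L using ih
  obtain ⟨i₀, hi₀⟩ := he.exists_bag_clique ht P (CTTroot (h + 1))
  obtain ⟨m, s, hms, hm⟩ := exists_ne_mem_uIcc i₀ I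
  obtain ⟨σ, hσ⟩ := he.exists_matching (CTT.adj_root_child (h := h) s)
  have hroot_inj : Function.Injective fun j => e (CTTroot (h + 1), j) :=
    he.injective.comp (Prod.mk_right_injective _)
  obtain ⟨T⟩ :=
    ((L s).some.cons _ σ hσ hroot_inj (he.root_notMem_range_child s)).truncate P hi₀ hm
  have hdisj : Disjoint (S m) (Finset.univ.image T.target) := by
    rw [← Finset.disjoint_coe, Finset.coe_image, Finset.coe_univ, Set.image_univ]
    refine Set.disjoint_of_subset_left (hSrange m) (Set.disjoint_left.2 ?_)
    rintro _ hv ⟨j, rfl⟩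
    rcases T.target_mem_set j with hs | ⟨j', hj'⟩
    · exact Set.disjoint_left.1 (he.disjoint_range_child hms) hv hs
    · rw [← hj'] at hv
      exact he.root_notMem_range_child m j' hv
  have hrange : Set.range (e ∘ Prod.map (CTT.child s) id) ∪
      Set.range (fun j => e (CTTroot (h + 1), j)) ⊆ Set.range e :=
    Set.union_subset (Set.range_comp_subset_range _ _) (Set.range_comp_subset_range _ _)
  refine ⟨I m, S m ∪ Finset.univ.image T.target, ?_, ?_, ?_, ⟨T.mono hrange⟩⟩
  · exact Finset.union_subset (hSbag m) (by simpa [Finset.image_subset_iff] using T.target_mem)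
  · rw [Finset.coe_union]
    exact Set.union_subset ((hSrange m).trans (Set.range_comp_subset_range _ _))
      (by
        rw [Finset.coe_image, Finset.coe_univ, Set.image_univ]
        exact Set.range_subset_iff.2 fun j => hrange (T.target_mem_set j))
  · rw [Finset.card_union_of_disjoint hdisj, Finset.card_image_of_injective _ T.target_injective]
    simpa using hScard m

end

variable {h t : ℕ}

theorem hasLinkedBag (ht : 0 < t) (P : PathDecomp G) {e : CTTVert h × Fin t → V}
    (he : IsBlowupEmbedding h t G e) : HasLinkedBag P e (t * (h + 1)) := by
  induction h with
  | zero => simpa using he.hasLinkedBag_card ht P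
  | succ h ih =>
    simpa [mul_add] using he.hasLinkedBag_succ ht P fun b => ih (he.comp_child b)

end IsBlowupEmbedding

theorem stmt16_general (t h : ℕ) (ht : 1 ≤ t)
    (M : ∀ ⦃x y⦄, (CTT h).Adj x y → (Fin t ≃ Fin t))
    (G : SimpleGraph ({l : List (Fin 3) // l.length ≤ h} × Fin t))
    (hG : ∀ a b, G.Adj a b ↔
      (a.1 = b.1 ∧ a.2 ≠ b.2) ∨ ∃ hxy : (CTT h).Adj a.1 b.1, M hxy a.2 = b.2)
    (P : PathDecomp G) :
    ∃ i : Fin P.n, t * (h + 1) ≤ (P.bag i).card ∧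
      ∃ (u w : Fin t → {l : List (Fin 3) // l.length ≤ h} × Fin t)
        (p : ∀ j, G.Walk (u j) (w j)),
        (∀ j, (p j).IsPath) ∧ (∀ j, (u j).1 = CTTroot h) ∧ (∀ j, w j ∈ P.bag i) ∧
        ∀ j j', j ≠ j' → ∀ v, v ∈ (p j).support → v ∉ (p j').support := by
  have he : IsBlowupEmbedding h t G id :=
    { injective := Function.injective_id
      adj_of_ne := fun _ _ _ hjj => (hG _ _).2 (Or.inl ⟨rfl, hjj⟩)
      exists_matching := fun hxy => ⟨M hxy, fun _ => (hG _ _).2 (Or.inr ⟨hxy, rfl⟩)⟩ }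
  obtain ⟨i, S, hS, -, hcard, ⟨L⟩⟩ := he.hasLinkedBag ht P
  exact ⟨i, hcard.trans (Finset.card_le_card hS), fun j => (CTTroot h, j), L.target, L.walk,
    L.isPath, fun _ => rfl, L.target_mem, fun j j' hjj => L.pairwise_disjoint hjj⟩

theorem stmt16 (t h : ℕ) (ht : 1 ≤ t)
    (M : ∀ ⦃x y⦄, (CTT h).Adj x y → (Fin t ≃ Fin t))
    (hM : ∀ ⦃x y⦄ (hxy : (CTT h).Adj x y), M hxy.symm = (M hxy).symm)
    (G : SimpleGraph ({l : List (Fin 3) // l.length ≤ h} × Fin t))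
    (hG : ∀ a b, G.Adj a b ↔
      (a.1 = b.1 ∧ a.2 ≠ b.2) ∨ ∃ hxy : (CTT h).Adj a.1 b.1, M hxy a.2 = b.2)
    (P : PathDecomp G) :
    ∃ i : Fin P.n, t * (h + 1) ≤ (P.bag i).card ∧
      ∃ (u w : Fin t → {l : List (Fin 3) // l.length ≤ h} × Fin t)
        (p : ∀ j, G.Walk (u j) (w j)),
        (∀ j, (p j).IsPath) ∧ (∀ j, (u j).1 = CTTroot h) ∧ (∀ j, w j ∈ P.bag i) ∧
        ∀ j j', j ≠ j' → ∀ v, v ∈ (p j).support → v ∉ (p j').support :=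
  stmt16_general t h ht M G hG P
end

section
/- Every graph with pathwidth p has treewidth at most p and contains no subdivision of a complete binary tree of height 2p+2 (i.e., any subdivision of a complete binary tree of height h has pathwidth at least ⌈h/2⌉ > p when h ≥ 2p+2). -/
open SimpleGraph

/-!
Padding a path decomposition with one empty bag turns it into a tree decomposition over a path.

For the lower bound, write `S t` for the part of a subdivided complete binary tree lying below the
node `t`. If the subtree at `t` has height at least `2k`, some bag of a path decomposition meets
`S t` in at least `k + 1` vertices. Inductively, three of the four grandchildren `a, m, d` of `t`
have bags meeting their own subtrees in `k` vertices, at positions in this order along the path.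
The subtrees of `a` and `d` are joined through `t` by a walk in `S t` avoiding `S m`; since the bag
of `m` separates the two ends of that walk, it contains a further vertex of `S t`.
-/

theorem Fintype.exists_ne_ne_le_le {ι α : Type*} [Fintype ι] [LinearOrder α]
    (hι : 2 < Fintype.card ι) (f : ι → α) :
    ∃ a m d, m ≠ a ∧ m ≠ d ∧ f a ≤ f m ∧ f m ≤ f d := by
  classical
  have : Nonempty ι := Fintype.card_pos_iff.mp (by omega)
  obtain ⟨a, ha⟩ := Finite.exists_min f
  obtain ⟨d, hd⟩ := Finite.exists_max f
  obtain ⟨m, -, hm⟩ := Finset.exists_mem_notMem_of_card_lt_card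
    (s := {a, d}) (t := Finset.univ) (Finset.card_le_two.trans_lt hι)
  simp only [Finset.mem_insert, Finset.mem_singleton, not_or] at hm
  exact ⟨a, m, d, hm.1, hm.2, ha m, hd m⟩

namespace SimpleGraph

theorem induce_hasse_eq_of_ordConnected {α : Type*} [Preorder α] {S : Set α}
    (hS : S.OrdConnected) : (hasse α).induce S = hasse S := by
  have hcov (a b : S) : (a : α) ⋖ b ↔ a ⋖ b :=
    Set.OrdConnected.apply_covBy_apply_iff (OrderEmbedding.subtype (· ∈ S))
      (by rwa [OrderEmbedding.coe_subtype, Subtype.range_coe])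
  ext a b
  simp only [comap_adj, hasse_adj, Function.Embedding.coe_subtype, hcov]

theorem connected_induce_pathGraph_of_ordConnected {n : ℕ} {S : Set (Fin n)}
    (hS : S.OrdConnected) (hne : S.Nonempty) : ((pathGraph n).induce S).Connected := by
  classical
  have : Nonempty S := hne.to_subtype
  let : LocallyFiniteOrder S := Fintype.toLocallyFiniteOrder
  let : SuccOrder S := LinearLocallyFiniteOrder.succOrder S
  rw [pathGraph, induce_hasse_eq_of_ordConnected hS]
  exact ⟨hasse_preconnected_of_succ S⟩

/-- Every edge `{v, v + 1}` is a bridge: a walk avoiding it cannot cross from `Iic v` to its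
complement. -/
theorem pathGraph_isAcyclic (n : ℕ) : (pathGraph n).IsAcyclic := by
  refine isAcyclic_iff_forall_adj_isBridge.mpr fun v w hadj => ?_
  wlog h : v.val + 1 = w.val generalizing v w
  · rw [Sym2.eq_swap]
    exact this w v hadj.symm ((pathGraph_adj.mp hadj).resolve_left h)
  rw [isBridge_iff]
  rintro ⟨p⟩
  obtain ⟨⟨⟨a, b⟩, hab⟩, -, ha, hb⟩ :=
    p.exists_boundary_dart (Set.Iic v) (Set.mem_Iic.mpr le_rfl)
      (by rw [Set.mem_Iic, Fin.le_def]; omega)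
  simp only [deleteEdges_adj, Set.mem_singleton_iff, pathGraph_adj, Set.mem_Iic, Fin.le_def,
    not_le] at hab ha hb
  obtain rfl : a = v := by ext; omega
  obtain rfl : b = w := by ext; omega
  exact hab.2 rfl

theorem pathGraph_isTree (n : ℕ) : (pathGraph (n + 1)).IsTree :=
  ⟨pathGraph_connected n, pathGraph_isAcyclic _⟩

end SimpleGraph

namespace PathDecomp

variable {V : Type} {G : SimpleGraph V} (P : PathDecomp G)

/-- An extra empty bag keeps the index path nonempty when `P.n = 0`. -/
def paddedBag (i : Fin (P.n + 1)) : Finset V :=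
  if h : (i : ℕ) < P.n then P.bag ⟨i, h⟩ else ∅

theorem paddedBag_castSucc (i : Fin P.n) : P.paddedBag i.castSucc = P.bag i := by
  simp [paddedBag]

theorem lt_of_mem_paddedBag {v : V} {i : Fin (P.n + 1)} (h : v ∈ P.paddedBag i) :
    (i : ℕ) < P.n := by
  by_contra hi
  simp [paddedBag, hi] at h

theorem ordConnected_setOf_mem_paddedBag (v : V) : {i | v ∈ P.paddedBag i}.OrdConnected := by
  refine ⟨fun i hi k hk j hj => ?_⟩
  have hkn := P.lt_of_mem_paddedBag hk
  have hjn : (j : ℕ) < P.n := lt_of_le_of_lt hj.2 hkn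
  have hin : (i : ℕ) < P.n := lt_of_le_of_lt hj.1 hjn
  simp only [Set.mem_ofPred_eq, paddedBag, hin, hjn, hkn, dite_true] at hi hk ⊢
  exact P.consecutive v ⟨i, hin⟩ ⟨j, hjn⟩ ⟨k, hkn⟩ hj.1 hj.2 hi hk

def toTreeDecomp : TreeDecomp G where
  ι := Fin (P.n + 1)
  tree := pathGraph (P.n + 1)
  isTree := pathGraph_isTree P.n
  bag := P.paddedBag
  covers v := by
    obtain ⟨i, hi⟩ := P.covers v
    exact ⟨i.castSucc, by rwa [paddedBag_castSucc]⟩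
  coversEdge u v huv := by
    obtain ⟨i, hu, hv⟩ := P.coversEdge huv
    exact ⟨i.castSucc, by rwa [paddedBag_castSucc], by rwa [paddedBag_castSucc]⟩
  bagConn v := by
    obtain ⟨i, hi⟩ := P.covers v
    exact connected_induce_pathGraph_of_ordConnected (P.ordConnected_setOf_mem_paddedBag v)
      ⟨i.castSucc, by simpa [paddedBag_castSucc] using hi⟩

theorem card_toTreeDecomp_bag_le {k : ℕ} (hP : ∀ i, (P.bag i).card ≤ k + 1)
    (x : P.toTreeDecomp.ι) : (P.toTreeDecomp.bag x).card ≤ k + 1 := by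
  change (P.paddedBag x).card ≤ k + 1
  unfold paddedBag
  split_ifs
  exacts [hP _, by simp]

theorem exists_mem_support_mem_bag_s19 {u w : V} (p : G.Walk u w) {i j k : Fin P.n} (hik : i ≤ k)
    (hkj : k ≤ j) (hu : u ∈ P.bag i) (hw : w ∈ P.bag j) : ∃ v ∈ p.support, v ∈ P.bag k := by
  induction p generalizing i with
  | nil => exact ⟨_, Walk.start_mem_support _, P.consecutive _ i k j hik hkj hu hw⟩
  | @cons a b _ hab q ih =>
    by_cases hak : a ∈ P.bag k
    · exact ⟨a, Walk.start_mem_support _, hak⟩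
    obtain ⟨l, hal, hbl⟩ := P.coversEdge hab
    have hlk : l ≤ k := le_of_not_ge fun hkl => hak (P.consecutive a i k l hik hkl hu hal)
    obtain ⟨v, hv, hvk⟩ := ih hlk hbl hw
    exact ⟨v, List.mem_cons_of_mem _ hv, hvk⟩

end PathDecomp

theorem TwLE.of_pwLE {V : Type} {G : SimpleGraph V} {k : ℕ} (h : PwLE G k) : TwLE G k :=
  let ⟨P, hP⟩ := h
  ⟨P.toTreeDecomp, P.card_toTreeDecomp_bag_le hP⟩

abbrev CBTNode (H : ℕ) : Type := {l : List Bool // l.length ≤ H}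

namespace CBT

variable {H : ℕ}

theorem adj_cons (x : CBTNode H) (b : Bool) (hx : x.1.length + 1 ≤ H) :
    (CBT H).Adj x ⟨b :: x.1, hx⟩ := by
  rw [CBT, SimpleGraph.fromRel_adj]
  exact ⟨fun h => by simpa using congrArg (fun z : CBTNode H => z.1.length) h, Or.inl ⟨b, rfl⟩⟩

def grandchild (t : CBTNode H) (ht : t.1.length + 2 ≤ H) (b : Bool × Bool) : CBTNode H :=
  ⟨b.1 :: b.2 :: t.1, by simp; omega⟩

theorem suffix_grandchild (t : CBTNode H) (ht : t.1.length + 2 ≤ H) (b : Bool × Bool) :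
    t.1 <:+ (grandchild t ht b).1 :=
  ⟨[b.1, b.2], rfl⟩

theorem grandchild_injective (t : CBTNode H) (ht : t.1.length + 2 ≤ H) :
    Function.Injective (grandchild t ht) := by
  intro b b' h
  simp only [grandchild, Subtype.mk.injEq, List.cons.injEq] at h
  exact Prod.ext h.1 h.2.1

end CBT

namespace SubdivCopy

variable {V : Type} {G : SimpleGraph V} {H : ℕ}

/-- Nodes below `t` are the strings having `t` as a suffix. -/
def subtreeSupp (c : SubdivCopy (CBT H) G) (t : CBTNode H) : Set V :=
  {v | (∃ x : CBTNode H, t.1 <:+ x.1 ∧ v = c.φ x) ∨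
    ∃ x y : CBTNode H, ∃ h : (CBT H).Adj x y, t.1 <:+ x.1 ∧ t.1 <:+ y.1 ∧ v ∈ (c.path h).support}

variable {c : SubdivCopy (CBT H) G}

theorem subtreeSupp_anti {t u : CBTNode H} (h : t.1 <:+ u.1) :
    c.subtreeSupp u ⊆ c.subtreeSupp t := by
  rintro v (⟨x, hx, rfl⟩ | ⟨x, y, hxy, hx, hy, hv⟩)
  exacts [Or.inl ⟨x, h.trans hx, rfl⟩, Or.inr ⟨x, y, hxy, h.trans hx, h.trans hy, hv⟩]

theorem phi_mem_subtreeSupp (t : CBTNode H) : c.φ t ∈ c.subtreeSupp t :=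
  Or.inl ⟨t, List.suffix_refl _, rfl⟩

theorem mem_subtreeSupp_of_mem_path {t x y : CBTNode H} (h : (CBT H).Adj x y)
    (hx : t.1 <:+ x.1) (hy : t.1 <:+ y.1) {v : V} (hv : v ∈ (c.path h).support) :
    v ∈ c.subtreeSupp t :=
  Or.inr ⟨x, y, h, hx, hy, hv⟩

theorem suffix_of_phi_mem_subtreeSupp {g z : CBTNode H} (h : c.φ z ∈ c.subtreeSupp g) :
    g.1 <:+ z.1 := by
  rcases h with ⟨x, hx, he⟩ | ⟨x, y, hxy, hx, hy, hv⟩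
  · exact c.inj he ▸ hx
  · rcases c.branch hxy z hv with rfl | rfl
    exacts [hx, hy]

theorem suffix_or_suffix_of_mem_path {g x y : CBTNode H} (h : (CBT H).Adj x y) {v : V}
    (hv : v ∈ (c.path h).support) (hg : v ∈ c.subtreeSupp g) : g.1 <:+ x.1 ∨ g.1 <:+ y.1 := by
  rcases hg with ⟨z, hz, rfl⟩ | ⟨x', y', h', hx', hy', hv'⟩
  · rcases c.branch h z hv with rfl | rfl
    exacts [Or.inl hz, Or.inr hz]
  by_cases hxy : ({x, y} : Set (CBTNode H)) = {x', y'}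
  · have hx : x ∈ ({x', y'} : Set (CBTNode H)) := hxy ▸ Set.mem_insert x {y}
    rcases hx with rfl | rfl
    exacts [Or.inl hx', Or.inl hy']
  · obtain ⟨z, ⟨hzxy, hz'⟩, rfl⟩ := c.disj h h' hxy v hv hv'
    have hgz : g.1 <:+ z.1 := by rcases hz' with rfl | rfl; exacts [hx', hy']
    rcases hzxy with rfl | rfl
    exacts [Or.inl hgz, Or.inr hgz]

theorem disjoint_subtreeSupp {t₁ t₂ : CBTNode H} (hlen : t₁.1.length = t₂.1.length)
    (hne : t₁ ≠ t₂) : Disjoint (c.subtreeSupp t₁) (c.subtreeSupp t₂) := by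
  refine Set.disjoint_left.mpr fun v hv₁ hv₂ => hne ?_
  obtain ⟨z, h₁, h₂⟩ : ∃ z : CBTNode H, t₁.1 <:+ z.1 ∧ t₂.1 <:+ z.1 := by
    rcases hv₁ with ⟨x, hx, rfl⟩ | ⟨x, y, h, hx, hy, hv⟩
    · exact ⟨x, hx, suffix_of_phi_mem_subtreeSupp hv₂⟩
    · rcases suffix_or_suffix_of_mem_path h hv hv₂ with h₂ | h₂
      exacts [⟨x, hx, h₂⟩, ⟨y, hy, h₂⟩]
  exact Subtype.ext ((List.suffix_of_suffix_length_le h₁ h₂ hlen.le).eq_of_length hlen)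

theorem exists_walk_phi_phi_of_suffix {t x : CBTNode H} (hx : t.1 <:+ x.1) :
    ∃ w : G.Walk (c.φ x) (c.φ t), ∀ v ∈ w.support,
      v ∈ c.subtreeSupp t ∧ ∀ g : CBTNode H, v ∈ c.subtreeSupp g → g.1 <:+ x.1 := by
  obtain ⟨u, hu⟩ := hx
  induction u generalizing x with
  | nil =>
    obtain rfl : x = t := Subtype.ext hu.symm
    refine ⟨Walk.nil, fun v hv => ?_⟩
    rw [Walk.support_nil, List.mem_singleton] at hv
    exact hv ▸ ⟨phi_mem_subtreeSupp x, fun g => suffix_of_phi_mem_subtreeSupp⟩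
  | cons b u ih =>
    have hlen : (u ++ t.1).length + 1 ≤ H := by simpa [← hu] using x.2
    let x' : CBTNode H := ⟨u ++ t.1, by omega⟩
    have hadj : (CBT H).Adj x' x := by
      convert CBT.adj_cons x' b hlen
      exact hu.symm
    have hx'x : x'.1 <:+ x.1 := ⟨[b], hu⟩
    obtain ⟨w, hw⟩ := ih (x := x') rfl
    refine ⟨(c.path hadj).reverse.append w, fun v hv => ?_⟩
    rw [Walk.mem_support_append_iff, Walk.support_reverse, List.mem_reverse] at hv
    rcases hv with hv | hv
    · refine ⟨mem_subtreeSupp_of_mem_path hadj ⟨u, rfl⟩ ⟨b :: u, hu⟩ hv, fun g hg => ?_⟩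
      rcases suffix_or_suffix_of_mem_path hadj hv hg with hg | hg
      exacts [hg.trans hx'x, hg]
    · exact ⟨(hw v hv).1, fun g hg => ((hw v hv).2 g hg).trans hx'x⟩

theorem exists_walk_phi_of_mem_subtreeSupp {t : CBTNode H} {v : V}
    (hv : v ∈ c.subtreeSupp t) :
    ∃ w : G.Walk v (c.φ t), ∀ z ∈ w.support, z ∈ c.subtreeSupp t := by
  classical
  rcases hv with ⟨x, hx, rfl⟩ | ⟨x, y, h, hx, hy, hv⟩
  · obtain ⟨w, hw⟩ := exists_walk_phi_phi_of_suffix (c := c) hx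
    exact ⟨w, fun z hz => (hw z hz).1⟩
  · obtain ⟨w, hw⟩ := exists_walk_phi_phi_of_suffix (c := c) hx
    refine ⟨((c.path h).takeUntil v hv).reverse.append w, fun z hz => ?_⟩
    rw [Walk.mem_support_append_iff, Walk.support_reverse, List.mem_reverse] at hz
    rcases hz with hz | hz
    exacts [mem_subtreeSupp_of_mem_path h hx hy (Walk.support_takeUntil_subset_support _ hv hz),
      (hw z hz).1]

theorem exists_walk_mem_diff_subtreeSupp {t a d m : CBTNode H} (ha : t.1 <:+ a.1)
    (hd : t.1 <:+ d.1) (hma : m.1.length = a.1.length) (hmd : m.1.length = d.1.length)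
    (hma' : m ≠ a) (hmd' : m ≠ d) {u w : V} (hu : u ∈ c.subtreeSupp a)
    (hw : w ∈ c.subtreeSupp d) :
    ∃ p : G.Walk u w, ∀ v ∈ p.support, v ∈ c.subtreeSupp t \ c.subtreeSupp m := by
  obtain ⟨pu, hpu⟩ := exists_walk_phi_of_mem_subtreeSupp hu
  obtain ⟨pw, hpw⟩ := exists_walk_phi_of_mem_subtreeSupp hw
  obtain ⟨qa, hqa⟩ := exists_walk_phi_phi_of_suffix (c := c) ha
  obtain ⟨qd, hqd⟩ := exists_walk_phi_phi_of_suffix (c := c) hd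
  refine ⟨pu.append (qa.append (qd.reverse.append pw.reverse)), fun v hv => ?_⟩
  simp only [Walk.mem_support_append_iff, Walk.support_reverse, List.mem_reverse] at hv
  rcases hv with hv | hv | hv | hv
  · exact ⟨subtreeSupp_anti ha (hpu v hv),
      fun hm => Set.disjoint_left.mp (disjoint_subtreeSupp hma hma') hm (hpu v hv)⟩
  · exact ⟨(hqa v hv).1, fun hm => hma' (Subtype.ext (((hqa v hv).2 m hm).eq_of_length hma))⟩
  · exact ⟨(hqd v hv).1, fun hm => hmd' (Subtype.ext (((hqd v hv).2 m hm).eq_of_length hmd))⟩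
  · exact ⟨subtreeSupp_anti hd (hpw v hv),
      fun hm => Set.disjoint_left.mp (disjoint_subtreeSupp hmd hmd') hm (hpw v hv)⟩

end SubdivCopy

open Finset in
open scoped Classical in
theorem SubdivCopy.exists_card_bag_filter_mem_subtreeSupp {V : Type} {G : SimpleGraph V}
    {H : ℕ} (c : SubdivCopy (CBT H) G) (P : PathDecomp G) (k : ℕ) (t : CBTNode H)
    (ht : t.1.length + 2 * k ≤ H) : ∃ i, k + 1 ≤ #{v ∈ P.bag i | v ∈ c.subtreeSupp t} := by
  induction k generalizing t with
  | zero =>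
    obtain ⟨i, hi⟩ := P.covers (c.φ t)
    exact ⟨i, card_pos.mpr ⟨c.φ t, mem_filter.mpr ⟨hi, phi_mem_subtreeSupp t⟩⟩⟩
  | succ k ih =>
    have ht₂ : t.1.length + 2 ≤ H := by omega
    let g := CBT.grandchild t ht₂
    choose i hi using fun b => ih (g b) (by simp [g, CBT.grandchild]; omega)
    obtain ⟨a, m, d, hma, hmd, hle₁, hle₂⟩ := Fintype.exists_ne_ne_le_le (by simp) i
    obtain ⟨u, hu⟩ := card_pos.mp ((Nat.succ_pos k).trans_le (hi a))
    obtain ⟨w, hw⟩ := card_pos.mp ((Nat.succ_pos k).trans_le (hi d))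
    rw [mem_filter] at hu hw
    have hinj := CBT.grandchild_injective t ht₂
    obtain ⟨p, hp⟩ := c.exists_walk_mem_diff_subtreeSupp (m := g m)
      (CBT.suffix_grandchild t ht₂ a) (CBT.suffix_grandchild t ht₂ d)
      rfl rfl (hinj.ne hma) (hinj.ne hmd) hu.2 hw.2
    obtain ⟨v, hvp, hv⟩ := P.exists_mem_support_mem_bag_s19 p hle₁ hle₂ hu.1 hw.1
    refine ⟨i m, (hi m).trans_lt (card_lt_card ?_)⟩
    refine (ssubset_iff_of_subset (monotone_filter_right _ fun x _ hx =>
      subtreeSupp_anti (CBT.suffix_grandchild t ht₂ m) hx)).mpr ⟨v, ?_, ?_⟩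
    · exact mem_filter.mpr ⟨hv, (hp v hvp).1⟩
    · exact fun hv' => (hp v hvp).2 (mem_filter.mp hv').2

theorem le_of_pwLE_of_containsSubdiv {V : Type} {G : SimpleGraph V} {p H : ℕ} (hpw : PwLE G p)
    (hc : ContainsSubdiv (CBT H) G) : H ≤ 2 * p + 1 := by
  classical
  obtain ⟨P, hP⟩ := hpw
  obtain ⟨c⟩ := hc
  by_contra! hH
  obtain ⟨i, hi⟩ := c.exists_card_bag_filter_mem_subtreeSupp P (p + 1) (CBTroot H)
    (by simp [CBTroot]; omega)
  have := (hi.trans (Finset.card_filter_le _ _)).trans (hP i)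
  omega

theorem stmt19_general {V : Type} (G : SimpleGraph V) (p : ℕ) (hpw : PwLE G p) :
    TwLE G p ∧ ¬ ContainsSubdiv (CBT (2 * p + 2)) G := by
  refine ⟨TwLE.of_pwLE hpw, fun hc => ?_⟩
  have := le_of_pwLE_of_containsSubdiv hpw hc
  omega

theorem stmt19 {V : Type} [Fintype V] (G : SimpleGraph V) (p : ℕ) (hpw : PwLE G p) :
    TwLE G p ∧ ¬ ContainsSubdiv (CBT (2 * p + 2)) G :=
  stmt19_general G p hpw
end
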